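/- arXiv:2509.06667 — 3 statements merged into one kernel-verified Lean document; each statement's English description precedes it below -/
import Mathlib

section
/- Let φ : ℝ³ → ℝ be a smooth graphical translator, i.e. Θ[φ] = 0. Then at every point of ℝ³ one has the identity L_φ φ = H_φ − 2·Hess φ(Dφ, Dφ)/(1+|Dφ|²)^{5/2}. (Here Hess φ(Dφ,Dφ)/(1+|Dφ|²)^{5/2} is the second fundamental form of graph(φ) evaluated twice at the tangential projection of the vertical direction e₄.) -/
open Real

noncomputable section

/-- Euclidean 3-space. -/
abbrev E3 : Type := EuclideanSpace ℝ (Fin 3)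

/-- The point (a,b,c) ∈ ℝ³. -/
def mk3 (a b c : ℝ) : E3 := (WithLp.equiv 2 (Fin 3 → ℝ)).symm ![a, b, c]

/-- Partial derivative in the i-th coordinate direction. -/
def pd (i : Fin 3) (f : E3 → ℝ) (x : E3) : ℝ := fderiv ℝ f x (EuclideanSpace.single i 1)

/-- Squared norm of the gradient, |Dφ|². -/
def gradSq (φ : E3 → ℝ) (x : E3) : ℝ := ∑ i, (pd i φ x) ^ 2

/-- Divergence of a vector field on ℝ³, given componentwise. -/
def divg (F : Fin 3 → E3 → ℝ) (x : E3) : ℝ := ∑ i, pd i (F i) x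

/-- Mean curvature of graph(φ): H_φ = 1/√(1+|Dφ|²). -/
def Hmc (φ : E3 → ℝ) (x : E3) : ℝ := 1 / sqrt (1 + gradSq φ x)

/-- The translator operator Θ[φ] = div(Dφ/√(1+|Dφ|²)) − 1/√(1+|Dφ|²). -/
def Θop (φ : E3 → ℝ) (x : E3) : ℝ :=
  divg (fun i y => pd i φ y / sqrt (1 + gradSq φ y)) x - 1 / sqrt (1 + gradSq φ x)

/-- The linearized translator operator L_φ u = div(a_φ Du) + b_φ · Du. -/
def Lop (φ u : E3 → ℝ) (x : E3) : ℝ :=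
  divg (fun i y => ∑ j, ((if i = j then (1:ℝ) else 0) / sqrt (1 + gradSq φ y)
        - pd i φ y * pd j φ y / (1 + gradSq φ y) ^ ((3:ℝ)/2)) * pd j u y) x
  + ∑ i, pd i φ x * pd i u x / (1 + gradSq φ x) ^ ((3:ℝ)/2)

/-- Entries of the Hessian of φ. -/
def hess (φ : E3 → ℝ) (x : E3) (i j : Fin 3) : ℝ := pd i (pd j φ) x

/-
With W = 1 + |Dφ|², the product rule gives, for every real exponent e,
div(W^e Dφ) = W^e (Δφ + 2e Hess φ(Dφ,Dφ)/W).
For e = -1/2 the translator equation becomes Δφ = 1 + Hess φ(Dφ,Dφ)/W. Since a_φ Dφ = W^{-3/2} Dφ,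
L_φ φ = div(W^{-3/2} Dφ) + |Dφ|² W^{-3/2}, and the case e = -3/2 together with the expression for
Δφ gives the identity.
-/

def lapl (φ : E3 → ℝ) (x : E3) : ℝ := ∑ i, hess φ x i i

def hessGradGrad (φ : E3 → ℝ) (x : E3) : ℝ := ∑ i, ∑ j, hess φ x i j * pd i φ x * pd j φ x

variable {φ : E3 → ℝ}

lemma gradSq_nonneg (φ : E3 → ℝ) (x : E3) : 0 ≤ gradSq φ x :=
  Finset.sum_nonneg fun _ _ => sq_nonneg _

lemma one_add_gradSq_pos (φ : E3 → ℝ) (x : E3) : 0 < 1 + gradSq φ x := by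
  linarith [gradSq_nonneg φ x]

lemma contDiff_pd (hφ : ContDiff ℝ (⊤ : ℕ∞) φ) (j : Fin 3) : ContDiff ℝ (⊤ : ℕ∞) (pd j φ) :=
  (hφ.fderiv_right (by simp)).clm_apply contDiff_const

lemma hasFDerivAt_pd (hφ : ContDiff ℝ (⊤ : ℕ∞) φ) (j : Fin 3) (x : E3) :
    HasFDerivAt (pd j φ) (fderiv ℝ (pd j φ) x) x :=
  ((contDiff_pd hφ j).differentiable (by simp) x).hasFDerivAt

lemma hasFDerivAt_gradSq (hφ : ContDiff ℝ (⊤ : ℕ∞) φ) (x : E3) :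
    HasFDerivAt (gradSq φ) (∑ k, (2 * pd k φ x) • fderiv ℝ (pd k φ) x) x := by
  refine HasFDerivAt.fun_sum fun k _ => ?_
  simpa using (hasFDerivAt_pd hφ k x).pow 2

lemma pd_pd_mul_rpow (hφ : ContDiff ℝ (⊤ : ℕ∞) φ) (e : ℝ) (i j : Fin 3) (x : E3) :
    pd i (fun y => pd j φ y * (1 + gradSq φ y) ^ e) x
      = (hess φ x i j + 2 * e * pd j φ x * (∑ k, hess φ x i k * pd k φ x) / (1 + gradSq φ x))
        * (1 + gradSq φ x) ^ e := by
  have hW := one_add_gradSq_pos φ x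
  have hpow : HasFDerivAt (fun y => (1 + gradSq φ y) ^ e)
      ((e * (1 + gradSq φ x) ^ (e - 1)) • ∑ k, (2 * pd k φ x) • fderiv ℝ (pd k φ) x) x :=
    (hasDerivAt_rpow_const (Or.inl hW.ne')).comp_hasFDerivAt (f := fun y => 1 + gradSq φ y) x
      ((hasFDerivAt_gradSq hφ x).const_add 1)
  show fderiv ℝ _ x (EuclideanSpace.single i 1) = _
  rw [((hasFDerivAt_pd hφ j x).fun_mul hpow).fderiv, rpow_sub_one hW.ne']
  have hess_eq : ∀ k, fderiv ℝ (pd k φ) x (EuclideanSpace.single i 1) = hess φ x i k :=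
    fun _ => rfl
  have hsum : ∑ k, 2 * pd k φ x * hess φ x i k = 2 * ∑ k, hess φ x i k * pd k φ x := by
    rw [Finset.mul_sum]
    exact Finset.sum_congr rfl fun _ _ => by ring
  simp only [add_apply, smul_apply, FunLike.coe_sum, Finset.sum_apply, smul_eq_mul, hess_eq, hsum]
  ring

lemma divg_grad_mul_rpow (hφ : ContDiff ℝ (⊤ : ℕ∞) φ) (e : ℝ) (x : E3) :
    divg (fun i y => pd i φ y * (1 + gradSq φ y) ^ e) x
      = (lapl φ x + 2 * e * hessGradGrad φ x / (1 + gradSq φ x)) * (1 + gradSq φ x) ^ e := by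
  simp only [divg, pd_pd_mul_rpow hφ, lapl, hessGradGrad, ← Finset.sum_mul]
  rw [Finset.sum_add_distrib, ← Finset.sum_div, Finset.mul_sum]
  congr 3
  refine Finset.sum_congr rfl fun i _ => ?_
  simp only [Finset.mul_sum]
  exact Finset.sum_congr rfl fun _ _ => by ring

lemma lapl_eq_of_translator (hφ : ContDiff ℝ (⊤ : ℕ∞) φ) {x : E3} (hsol : Θop φ x = 0) :
    lapl φ x = 1 + hessGradGrad φ x / (1 + gradSq φ x) := by
  have hW := one_add_gradSq_pos φ x
  have hfield : (fun i y => pd i φ y / √(1 + gradSq φ y))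
      = fun i y => pd i φ y * (1 + gradSq φ y) ^ (-(1 / 2 : ℝ)) := by
    funext i y
    rw [div_eq_mul_inv, sqrt_eq_rpow, ← rpow_neg (one_add_gradSq_pos φ y).le]
  have hinv : 1 / √(1 + gradSq φ x) = 1 * (1 + gradSq φ x) ^ (-(1 / 2 : ℝ)) := by
    rw [one_mul, one_div, sqrt_eq_rpow, rpow_neg hW.le]
  rw [Θop, hfield, divg_grad_mul_rpow hφ, hinv, sub_eq_zero] at hsol
  have h := mul_right_cancel₀ (rpow_pos_of_pos hW _).ne' hsol
  linear_combination h

lemma sum_Lop_coeff_mul_pd (φ : E3 → ℝ) (i : Fin 3) (y : E3) :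
    ∑ j, ((if i = j then (1:ℝ) else 0) / √(1 + gradSq φ y)
        - pd i φ y * pd j φ y / (1 + gradSq φ y) ^ ((3:ℝ)/2)) * pd j φ y
      = pd i φ y * (1 + gradSq φ y) ^ (-((3:ℝ)/2)) := by
  have hW := one_add_gradSq_pos φ y
  have h32 : (1 + gradSq φ y) ^ ((3:ℝ)/2) = √(1 + gradSq φ y) ^ 3 := by
    rw [rpow_div_two_eq_sqrt _ hW.le]; norm_cast
  have hs := sqrt_pos.2 hW
  rw [rpow_neg hW.le, h32]
  simp only [sub_mul, Finset.sum_sub_distrib, ite_mul, one_mul, zero_mul, div_mul_eq_mul_div,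
    ← Finset.sum_div, Finset.sum_ite_eq, Finset.mem_univ, if_true, mul_assoc, ← Finset.mul_sum, ← sq]
  rw [show ∑ j, pd j φ y ^ 2 = gradSq φ y from rfl]
  set s := √(1 + gradSq φ y)
  have hgrad : gradSq φ y = s ^ 2 - 1 := by rw [sq_sqrt hW.le]; ring
  rw [hgrad]
  field_simp
  ring

/-- for a smooth graphical translator φ one has
L_φ φ = H_φ − 2·Hess φ(Dφ,Dφ)/(1+|Dφ|²)^{5/2} at every point. -/
theorem statement0 (φ : E3 → ℝ) (hφ : ContDiff ℝ (⊤ : ℕ∞) φ)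
    (hsol : ∀ x, Θop φ x = 0) (x : E3) :
    Lop φ φ x = Hmc φ x
      - 2 * (∑ i, ∑ j, hess φ x i j * pd i φ x * pd j φ x) / (1 + gradSq φ x) ^ ((5:ℝ)/2) := by
  have hW := one_add_gradSq_pos φ x
  have hquad : ∑ i, pd i φ x * pd i φ x / (1 + gradSq φ x) ^ ((3:ℝ)/2)
      = gradSq φ x / (1 + gradSq φ x) ^ ((3:ℝ)/2) := by
    simp only [← Finset.sum_div, ← sq]
    rfl
  have h32 : (1 + gradSq φ x) ^ ((3:ℝ)/2) = √(1 + gradSq φ x) ^ 3 := by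
    rw [rpow_div_two_eq_sqrt _ hW.le]; norm_cast
  have h52 : (1 + gradSq φ x) ^ ((5:ℝ)/2) = √(1 + gradSq φ x) ^ 5 := by
    rw [rpow_div_two_eq_sqrt _ hW.le]; norm_cast
  rw [Lop, funext₂ (sum_Lop_coeff_mul_pd φ), divg_grad_mul_rpow hφ,
    lapl_eq_of_translator hφ (hsol x), hquad, Hmc, ← hessGradGrad, rpow_neg hW.le, h32, h52]
  set s := √(1 + gradSq φ x)
  have hgrad : gradSq φ x = s ^ 2 - 1 := by rw [sq_sqrt hW.le]; ring
  have hs : 0 < s := sqrt_pos.2 hW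
  rw [hgrad]
  field_simp
  ring
end
end

section
/- Let φ : ℝ³ → ℝ be a smooth function that is S¹-symmetric in (x₂,x₃) (i.e. φ(x₁,x₂,x₃) depends only on x₁ and x₂²+x₃²), and set ψ := −Θ[φ]. Let O ⊂ ℝ² be open and V : O → (0,∞) a smooth function satisfying φ(x, V(x,t), 0) = −t and ∂_{x₂}φ(x, V(x,t), 0) > 0 for all (x,t) ∈ O. Then for all (x,t) ∈ O: −V_t + [(1+V_t²)V_{xx} + (1+V_x²)V_{tt} − 2V_x V_t V_{xt}]/(1+V_x²+V_t²) − 1/V = √(1+V_x²+V_t²) · ψ(x, V(x,t), 0). -/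
open Real

noncomputable section

/-- Partial derivative in the first variable of a function on ℝ². -/
def pdx (f : ℝ × ℝ → ℝ) (p : ℝ × ℝ) : ℝ := fderiv ℝ f p (1, 0)

/-- Partial derivative in the second variable of a function on ℝ². -/
def pdt (f : ℝ × ℝ → ℝ) (p : ℝ × ℝ) : ℝ := fderiv ℝ f p (0, 1)

/-- φ is S¹-symmetric in the (x₂,x₃)-variables. -/
def S1Sym (φ : E3 → ℝ) : Prop :=
  ∀ x₁ a b a' b' : ℝ, a ^ 2 + b ^ 2 = a' ^ 2 + b' ^ 2 → φ (mk3 x₁ a b) = φ (mk3 x₁ a' b')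

/-! ### Auxiliary material -/

def ee (i : Fin 3) : E3 := EuclideanSpace.single i 1

lemma mk3_eq (a b c : ℝ) : mk3 a b c = a • ee 0 + b • ee 1 + c • ee 2 := by
  ext i
  have : (mk3 a b c) i = ![a,b,c] i := rfl
  rw [this]
  fin_cases i <;>
    simp [ee, EuclideanSpace.single_apply, PiLp.add_apply, PiLp.smul_apply]

lemma pd_smooth {φ : E3 → ℝ} (hφ : ContDiff ℝ (⊤ : ℕ∞) φ) (i : Fin 3) :
    ContDiff ℝ (⊤ : ℕ∞) (pd i φ) := by
  unfold pd
  exact (hφ.fderiv_right (m := (⊤:ℕ∞)) (by exact_mod_cast le_of_eq (by simp))).clm_apply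
    contDiff_const

lemma pd_ee (f : E3 → ℝ) (x : E3) (i : Fin 3) : fderiv ℝ f x (ee i) = pd i f x := rfl

lemma hasDerivAt_line (f : E3 → ℝ) (hf : Differentiable ℝ f) (q v : E3) (s : ℝ) :
    HasDerivAt (fun t => f (q + t • v)) (fderiv ℝ f (q + s • v) v) s := by
  have hc : HasDerivAt (fun t : ℝ => q + t • v) v s := by
    simpa using ((hasDerivAt_id s).smul_const v).const_add q
  exact ((hf (q + s • v)).hasFDerivAt).comp_hasDerivAt s hc

lemma pd_symm {φ : E3 → ℝ} (hφ : ContDiff ℝ (⊤ : ℕ∞) φ) (i j : Fin 3) (x : E3) :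
    pd i (pd j φ) x = pd j (pd i φ) x := by
  have hsym : IsSymmSndFDerivAt ℝ φ x :=
    (hφ.contDiffAt).isSymmSndFDerivAt (by rw [minSmoothness_of_isRCLikeNormedField]; exact WithTop.coe_le_coe.2 (le_top : (2:ℕ∞) ≤ ⊤))
  have hd : DifferentiableAt ℝ (fderiv ℝ φ) x :=
    ((hφ.fderiv_right (m := (⊤:ℕ∞)) (by exact_mod_cast le_of_eq (by simp))).differentiable
      (by decide)) x
  have key : ∀ a b : Fin 3,
      pd a (pd b φ) x = fderiv ℝ (fderiv ℝ φ) x (ee a) (ee b) := by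
    intro a b
    have : pd b φ = fun y => (fderiv ℝ φ y) (ee b) := rfl
    rw [show pd a (pd b φ) x = fderiv ℝ (fun y => (fderiv ℝ φ y) (ee b)) x (ee a) from rfl]
    rw [fderiv_clm_apply hd (differentiableAt_const _)]
    simp
  rw [key i j, key j i]
  exact hsym (ee i) (ee j)

/-! ### Radial symmetry lemmas -/

lemma mk3_line1 (x w : ℝ) : mk3 x 0 0 + w • ee 1 = mk3 x w 0 := by
  rw [mk3_eq, mk3_eq]; module

lemma mk3_line2 (x r s : ℝ) : mk3 x r 0 + s • ee 2 = mk3 x r s := by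
  rw [mk3_eq, mk3_eq]; module

lemma hasDerivAt_F {φ : E3 → ℝ} (hφ : Differentiable ℝ φ) (x w : ℝ) :
    HasDerivAt (fun u => φ (mk3 x u 0)) (pd 1 φ (mk3 x w 0)) w := by
  have h := hasDerivAt_line φ hφ (mk3 x 0 0) (ee 1) w
  have hc : (fun t => φ (mk3 x 0 0 + t • ee 1)) = fun t => φ (mk3 x t 0) := by
    funext t; rw [mk3_line1]
  rw [hc, mk3_line1] at h
  exact h

lemma pd2_line {φ : E3 → ℝ} (hφ : ContDiff ℝ (⊤ : ℕ∞) φ) (hsym : S1Sym φ)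
    (x r : ℝ) (hr : 0 < r) (s : ℝ) :
    pd 2 φ (mk3 x r s) =
      pd 1 φ (mk3 x (Real.sqrt (r^2+s^2)) 0) * (s / Real.sqrt (r^2+s^2)) := by
  have hd : Differentiable ℝ φ := hφ.differentiable (by decide)
  have hpos : (0:ℝ) < r^2 + s^2 := by positivity
  have h1 : HasDerivAt (fun t => φ (mk3 x r t)) (pd 2 φ (mk3 x r s)) s := by
    have h := hasDerivAt_line φ hd (mk3 x r 0) (ee 2) s
    have hc : (fun t => φ (mk3 x r 0 + t • ee 2)) = fun t => φ (mk3 x r t) := by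
      funext t; rw [mk3_line2]
    rw [hc, mk3_line2] at h
    exact h
  have hgeq : ∀ t : ℝ, φ (mk3 x (Real.sqrt (r^2+t^2)) 0) = φ (mk3 x r t) := by
    intro t
    refine (hsym x r t (Real.sqrt (r^2+t^2)) 0 ?_).symm
    rw [Real.sq_sqrt (by positivity)]; ring
  have hu : HasDerivAt (fun t : ℝ => Real.sqrt (r^2+t^2)) (s / Real.sqrt (r^2+s^2)) s := by
    have hin : HasDerivAt (fun t : ℝ => r^2 + t^2) (2*s) s := by
      simpa using ((hasDerivAt_pow 2 s).const_add (r^2))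
    have hsq := (Real.hasDerivAt_sqrt (ne_of_gt hpos)).comp s hin
    convert hsq using 1
    · rfl
    · rfl
    · rfl
    · ring
  have h2 : HasDerivAt (fun t => φ (mk3 x (Real.sqrt (r^2+t^2)) 0))
      (pd 1 φ (mk3 x (Real.sqrt (r^2+s^2)) 0) * (s / Real.sqrt (r^2+s^2))) s :=
    by have := (hasDerivAt_F hd x (Real.sqrt (r^2+s^2))).comp s hu; exact this
  have hc2 : (fun t => φ (mk3 x (Real.sqrt (r^2+t^2)) 0)) = fun t => φ (mk3 x r t) := by
    funext t; rw [hgeq]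
  rw [hc2] at h2
  exact h1.unique h2

lemma pd2_zero {φ : E3 → ℝ} (hφ : ContDiff ℝ (⊤ : ℕ∞) φ) (hsym : S1Sym φ)
    (x r : ℝ) (hr : 0 < r) : pd 2 φ (mk3 x r 0) = 0 := by
  rw [pd2_line hφ hsym x r hr 0]
  simp

lemma pd22 {φ : E3 → ℝ} (hφ : ContDiff ℝ (⊤ : ℕ∞) φ) (hsym : S1Sym φ)
    (x r : ℝ) (hr : 0 < r) :
    pd 2 (pd 2 φ) (mk3 x r 0) = pd 1 φ (mk3 x r 0) / r := by
  have hd2 : Differentiable ℝ (pd 2 φ) := (pd_smooth hφ 2).differentiable (by decide)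
  have hd1 : Differentiable ℝ (pd 1 φ) := (pd_smooth hφ 1).differentiable (by decide)
  have h1 : HasDerivAt (fun t => pd 2 φ (mk3 x r t)) (pd 2 (pd 2 φ) (mk3 x r 0)) 0 := by
    have h := hasDerivAt_line (pd 2 φ) hd2 (mk3 x r 0) (ee 2) 0
    have hc : (fun t => pd 2 φ (mk3 x r 0 + t • ee 2)) = fun t => pd 2 φ (mk3 x r t) := by
      funext t; rw [mk3_line2]
    rw [hc, mk3_line2] at h
    exact h
  have hu0 : HasDerivAt (fun t : ℝ => Real.sqrt (r^2+t^2)) 0 0 := by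
    have hin : HasDerivAt (fun t : ℝ => r^2 + t^2) 0 0 := by
      simpa using ((hasDerivAt_pow 2 (0:ℝ)).const_add (r^2))
    have hsq := (Real.hasDerivAt_sqrt (by positivity : r^2 + (0:ℝ)^2 ≠ 0)).comp 0 hin
    simpa [Function.comp_def] using hsq
  have hr0 : Real.sqrt (r^2+(0:ℝ)^2) = r := by
    rw [show r^2+(0:ℝ)^2 = r^2 by ring, Real.sqrt_sq hr.le]
  have hG : HasDerivAt (fun t : ℝ => pd 1 φ (mk3 x (Real.sqrt (r^2+t^2)) 0)) 0 0 := by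
    have := (hasDerivAt_F (φ := pd 1 φ) hd1 x (Real.sqrt (r^2+(0:ℝ)^2))).comp 0 hu0
    simpa [Function.comp_def] using this
  have hH : HasDerivAt (fun t : ℝ => t / Real.sqrt (r^2+t^2)) (1/r) 0 := by
    have hnum : HasDerivAt (fun t : ℝ => t) 1 0 := hasDerivAt_id 0
    have := hnum.div hu0 (by rw [hr0]; exact hr.ne')
    rw [hr0] at this
    convert this using 1
    · rfl
    · rfl
    · rfl
    · field_simp
      ring
  have h2 : HasDerivAt (fun t => pd 2 φ (mk3 x r t)) (pd 1 φ (mk3 x r 0) / r) 0 := by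
    have hprod := hG.fun_mul hH
    have hc : (fun t : ℝ => pd 1 φ (mk3 x (Real.sqrt (r^2+t^2)) 0) * (t / Real.sqrt (r^2+t^2)))
        = fun t => pd 2 φ (mk3 x r t) := by
      funext t; rw [← pd2_line hφ hsym x r hr t]
    rw [hc] at hprod
    convert hprod using 1
    · rfl
    · rfl
    · rw [hr0]
      field_simp
      ring
  exact h1.unique h2

/-! ### Expansion of the translator operator -/

lemma gradSq_hasFDerivAt {φ : E3 → ℝ} (hφ : ContDiff ℝ (⊤ : ℕ∞) φ) (z : E3) :
    HasFDerivAt (gradSq φ) (∑ k, (2 * pd k φ z) • fderiv ℝ (pd k φ) z) z := by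
  have : HasFDerivAt (fun y => ∑ k : Fin 3, (pd k φ y)^2)
      (∑ k, (2 * pd k φ z) • fderiv ℝ (pd k φ) z) z := by
    apply HasFDerivAt.fun_sum
    intro k _
    have hk : HasFDerivAt (pd k φ) (fderiv ℝ (pd k φ) z) z :=
      (((pd_smooth hφ k).differentiable (by decide)) z).hasFDerivAt
    have h2 : (fun y => (pd k φ y)^2) = fun y => pd k φ y * pd k φ y := by
      funext y; ring
    rw [h2]
    exact (hk.fun_mul hk).congr_fderiv (by module)
  exact this

lemma sqrtW_hasFDerivAt {φ : E3 → ℝ} (hφ : ContDiff ℝ (⊤ : ℕ∞) φ) (z : E3) :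
    HasFDerivAt (fun y => Real.sqrt (1 + gradSq φ y))
      ((1 / (2 * Real.sqrt (1 + gradSq φ z))) •
        (∑ k, (2 * pd k φ z) • fderiv ℝ (pd k φ) z)) z := by
  have hpos : (0:ℝ) < 1 + gradSq φ z := by
    have : 0 ≤ gradSq φ z := Finset.sum_nonneg fun i _ => sq_nonneg _
    linarith
  have hin : HasFDerivAt (fun y => 1 + gradSq φ y)
      (∑ k, (2 * pd k φ z) • fderiv ℝ (pd k φ) z) z := by
    simpa using (gradSq_hasFDerivAt hφ z).const_add 1
  have hsq := (Real.hasDerivAt_sqrt hpos.ne').comp_hasFDerivAt z hin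
  simpa [smul_smul, Function.comp_def] using hsq

lemma Wpos (φ : E3 → ℝ) (z : E3) : (0:ℝ) < Real.sqrt (1 + gradSq φ z) := by
  apply Real.sqrt_pos.mpr
  have : 0 ≤ gradSq φ z := Finset.sum_nonneg fun i _ => sq_nonneg _
  linarith

lemma pd_quot {φ : E3 → ℝ} (hφ : ContDiff ℝ (⊤ : ℕ∞) φ) (i j : Fin 3) (z : E3) :
    pd j (fun y => pd i φ y / Real.sqrt (1 + gradSq φ y)) z
      = pd j (pd i φ) z / Real.sqrt (1 + gradSq φ z)
        - pd i φ z * (∑ k, pd k φ z * pd j (pd k φ) z) / (Real.sqrt (1 + gradSq φ z))^3 := by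
  set W := Real.sqrt (1 + gradSq φ z) with hWdef
  have hWpos : (0:ℝ) < W := Wpos φ z
  have hnum : HasFDerivAt (pd i φ) (fderiv ℝ (pd i φ) z) z :=
    (((pd_smooth hφ i).differentiable (by decide)) z).hasFDerivAt
  have hinv := (hasDerivAt_inv hWpos.ne').comp_hasFDerivAt z (sqrtW_hasFDerivAt hφ z)
  have hprod := hnum.fun_mul hinv
  simp only [Function.comp_def] at hprod
  have hfun : (fun y => pd i φ y / Real.sqrt (1 + gradSq φ y))
      = fun y => pd i φ y * (Real.sqrt (1 + gradSq φ y))⁻¹ := by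
    funext y; rw [div_eq_mul_inv]
  rw [hfun, show pd j (fun y => pd i φ y * (Real.sqrt (1 + gradSq φ y))⁻¹) z
      = fderiv ℝ (fun y => pd i φ y * (Real.sqrt (1 + gradSq φ y))⁻¹) z (ee j) from rfl,
    hprod.fderiv]
  have hpdk : ∀ k : Fin 3, fderiv ℝ (pd k φ) z (ee j) = pd j (pd k φ) z := fun k => rfl
  simp only [ContinuousLinearMap.add_apply, ContinuousLinearMap.smul_apply,
    ContinuousLinearMap.sum_apply, smul_eq_mul, Fin.sum_univ_three, hpdk]
  rw [← hWdef]
  field_simp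
  ring

lemma theta_eq {φ : E3 → ℝ} (hφ : ContDiff ℝ (⊤ : ℕ∞) φ) (z : E3) :
    Θop φ z =
      (pd 0 (pd 0 φ) z + pd 1 (pd 1 φ) z + pd 2 (pd 2 φ) z) / Real.sqrt (1 + gradSq φ z)
      - (pd 0 φ z * (pd 0 φ z * pd 0 (pd 0 φ) z + pd 1 φ z * pd 0 (pd 1 φ) z
            + pd 2 φ z * pd 0 (pd 2 φ) z)
        + pd 1 φ z * (pd 0 φ z * pd 1 (pd 0 φ) z + pd 1 φ z * pd 1 (pd 1 φ) z
            + pd 2 φ z * pd 1 (pd 2 φ) z)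
        + pd 2 φ z * (pd 0 φ z * pd 2 (pd 0 φ) z + pd 1 φ z * pd 2 (pd 1 φ) z
            + pd 2 φ z * pd 2 (pd 2 φ) z)) / (Real.sqrt (1 + gradSq φ z))^3
      - 1 / Real.sqrt (1 + gradSq φ z) := by
  unfold Θop divg
  rw [Fin.sum_univ_three]
  rw [pd_quot hφ 0 0 z, pd_quot hφ 1 1 z, pd_quot hφ 2 2 z]
  simp only [Fin.sum_univ_three]
  ring

/-! ### The implicit function computations -/

def Mfun (V : ℝ × ℝ → ℝ) : ℝ × ℝ → E3 := fun z => z.1 • ee 0 + V z • ee 1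

lemma Mfun_eq (V : ℝ × ℝ → ℝ) (z : ℝ × ℝ) : Mfun V z = mk3 z.1 (V z) 0 := by
  rw [mk3_eq]; unfold Mfun; module

lemma hasFDerivAt_M {V : ℝ × ℝ → ℝ} {z : ℝ × ℝ} (hVd : DifferentiableAt ℝ V z) :
    HasFDerivAt (Mfun V)
      ((ContinuousLinearMap.fst ℝ ℝ ℝ).smulRight (ee 0)
        + (fderiv ℝ V z).smulRight (ee 1)) z := by
  have l1 : HasFDerivAt (fun w : ℝ × ℝ => w.1 • ee 0)
      ((ContinuousLinearMap.fst ℝ ℝ ℝ).smulRight (ee 0)) z :=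
    (hasFDerivAt_fst (𝕜 := ℝ)).smul_const (ee 0)
  have l2 : HasFDerivAt (fun w : ℝ × ℝ => V w • ee 1)
      ((fderiv ℝ V z).smulRight (ee 1)) z :=
    hVd.hasFDerivAt.smul_const (ee 1)
  exact l1.add l2

lemma key12 {φ : E3 → ℝ} (hφ : ContDiff ℝ (⊤ : ℕ∞) φ) {O : Set (ℝ × ℝ)} (hO : IsOpen O)
    {V : ℝ × ℝ → ℝ} (hV : ContDiffOn ℝ (⊤ : ℕ∞) V O)
    (hVdef : ∀ p ∈ O, φ (mk3 p.1 (V p) 0) = -p.2) {z : ℝ × ℝ} (hz : z ∈ O) :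
    pd 0 φ (Mfun V z) + pd 1 φ (Mfun V z) * pdx V z = 0
      ∧ pd 1 φ (Mfun V z) * pdt V z = -1 := by
  have hVd : DifferentiableAt ℝ V z :=
    (hV.contDiffAt (hO.mem_nhds hz)).differentiableAt (by decide)
  have hM := hasFDerivAt_M (V := V) hVd
  have hcomp : HasFDerivAt (fun w => φ (Mfun V w))
      ((fderiv ℝ φ (Mfun V z)).comp
        ((ContinuousLinearMap.fst ℝ ℝ ℝ).smulRight (ee 0)
          + (fderiv ℝ V z).smulRight (ee 1))) z :=
    ((hφ.differentiable (by decide) (Mfun V z)).hasFDerivAt).comp z hM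
  have h2 : (fun w => φ (Mfun V w)) =ᶠ[nhds z] (fun w : ℝ × ℝ => -w.2) := by
    filter_upwards [hO.mem_nhds hz] with w hw
    rw [Mfun_eq]; exact hVdef w hw
  have h3 : HasFDerivAt (fun w : ℝ × ℝ => -w.2)
      (-(ContinuousLinearMap.snd ℝ ℝ ℝ)) z := (hasFDerivAt_snd (𝕜 := ℝ)).neg
  have heq : (fderiv ℝ φ (Mfun V z)).comp
      ((ContinuousLinearMap.fst ℝ ℝ ℝ).smulRight (ee 0)
        + (fderiv ℝ V z).smulRight (ee 1)) = -(ContinuousLinearMap.snd ℝ ℝ ℝ) := by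
    rw [← hcomp.fderiv, h2.fderiv_eq, h3.fderiv]
  constructor
  · have happ := DFunLike.congr_fun heq (1, 0)
    simp only [ContinuousLinearMap.comp_apply, ContinuousLinearMap.add_apply,
      ContinuousLinearMap.smulRight_apply, ContinuousLinearMap.coe_fst',
      ContinuousLinearMap.neg_apply, ContinuousLinearMap.coe_snd',
      map_add, map_smul, smul_eq_mul, one_smul] at happ
    rw [pd_ee, pd_ee] at happ
    have hx : fderiv ℝ V z (1, 0) = pdx V z := rfl
    rw [hx] at happ
    linarith
  · have happ := DFunLike.congr_fun heq (0, 1)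
    simp only [ContinuousLinearMap.comp_apply, ContinuousLinearMap.add_apply,
      ContinuousLinearMap.smulRight_apply, ContinuousLinearMap.coe_fst',
      ContinuousLinearMap.neg_apply, ContinuousLinearMap.coe_snd',
      map_add, map_smul, smul_eq_mul, zero_smul, zero_mul, map_zero, zero_add] at happ
    rw [pd_ee] at happ
    have ht : fderiv ℝ V z (0, 1) = pdt V z := rfl
    rw [ht] at happ
    linarith

/-! ### The algebraic endgame -/

lemma endgame (b r Vx Vt Vxx Vxt Vtt a h00 h01 h10 h11 h22 c3 p02 p12 p20 p21 p22 S W : ℝ)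
    (hb : 0 < b) (hr : 0 < r) (hS : 0 < S) (hW : W = b * S)
    (hS2 : S ^ 2 = 1 + Vx ^ 2 + Vt ^ 2)
    (hsym : h10 = h01) (hc3 : c3 = 0)
    (e1 : a + b * Vx = 0) (e2 : b * Vt = -1)
    (e3 : h00 + Vx * h10 + (b * Vxx + Vx * (h01 + Vx * h11)) = 0)
    (e4 : Vt * h10 + (b * Vxt + Vx * (Vt * h11)) = 0)
    (e5 : b * Vtt + Vt * (Vt * h11) = 0)
    (e6 : h22 = b / r) :
    -Vt + ((1 + Vt ^ 2) * Vxx + (1 + Vx ^ 2) * Vtt - 2 * Vx * Vt * Vxt)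
        / (1 + Vx ^ 2 + Vt ^ 2) - 1 / r
    = S * (-((h00 + h11 + h22) / W
        - (a * (a * h00 + b * h01 + c3 * p02)
           + b * (a * h10 + b * h11 + c3 * p12)
           + c3 * (a * p20 + b * p21 + c3 * p22)) / W ^ 3
        - 1 / W)) := by
  have hbne : b ≠ 0 := hb.ne'
  have hSne : S ≠ 0 := hS.ne'
  subst hsym hc3 hW e6
  have hVt : Vt = -(1/b) := by
    field_simp
    linarith
  subst hVt
  have ha : a = -(b * Vx) := by linarith
  subst ha
  have hh11 : h11 = -(b^3 * Vtt) := by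
    field_simp at e5
    linarith
  subst hh11
  have hh01 : h10 = b^2 * Vxt + b^3 * Vtt * Vx := by
    field_simp at e4
    apply mul_left_cancel₀ hbne
    linear_combination -b * e4
  subst hh01
  have hh00 : h00 = -(b*Vxx) - 2*Vx*(b^2 * Vxt + b^3 * Vtt * Vx) - Vx^2*(-(b^3 * Vtt)) := by
    linear_combination e3
  subst hh00
  have hred : ∀ X Y : ℝ, S * (-(X / (b*S) - Y / (b*S) ^ 3 - 1 / (b*S)))
      = -(X/b) + Y/(b^3*S^2) + 1/b := by
    intro X Y
    field_simp
    ring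
  rw [hred, hS2]
  have hpos : (0:ℝ) < 1 + Vx^2 + (-(1/b))^2 := by positivity
  field_simp
  ring

/-- if V is the cylindrical profile function of graph(φ),
i.e. φ(x,V(x,t),0) = −t with ∂₂φ > 0, then
−V_t + [(1+V_t²)V_{xx} + (1+V_x²)V_{tt} − 2V_xV_tV_{xt}]/(1+V_x²+V_t²) − 1/V
  = √(1+V_x²+V_t²)·ψ(x,V,0), where ψ := −Θ[φ]. -/
theorem statement8 (φ : E3 → ℝ) (hφ : ContDiff ℝ (⊤ : ℕ∞) φ) (hsym : S1Sym φ)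
    (O : Set (ℝ × ℝ)) (hO : IsOpen O) (V : ℝ × ℝ → ℝ)
    (hV : ContDiffOn ℝ (⊤ : ℕ∞) V O)
    (hVpos : ∀ p ∈ O, 0 < V p)
    (hVdef : ∀ p ∈ O, φ (mk3 p.1 (V p) 0) = -p.2)
    (hVder : ∀ p ∈ O, 0 < pd 1 φ (mk3 p.1 (V p) 0)) :
    ∀ p ∈ O,
      -pdt V p
        + ((1 + (pdt V p) ^ 2) * pdx (pdx V) p + (1 + (pdx V p) ^ 2) * pdt (pdt V) p
            - 2 * pdx V p * pdt V p * pdt (pdx V) p)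
          / (1 + (pdx V p) ^ 2 + (pdt V p) ^ 2)
        - 1 / V p
      = sqrt (1 + (pdx V p) ^ 2 + (pdt V p) ^ 2) * (-Θop φ (mk3 p.1 (V p) 0)) := by
  intro p hp
  set q : E3 := mk3 p.1 (V p) 0 with hq
  have hr : 0 < V p := hVpos p hp
  have hb : 0 < pd 1 φ q := hVder p hp
  have hVc : ContDiffAt ℝ (⊤ : ℕ∞) V p := hV.contDiffAt (hO.mem_nhds hp)
  have hVdp : DifferentiableAt ℝ V p := hVc.differentiableAt (by decide)
  have hMp : Mfun V p = q := Mfun_eq V p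
  have k1 : ∀ z ∈ O, pd 0 φ (Mfun V z) + pd 1 φ (Mfun V z) * pdx V z = 0 :=
    fun z hz => (key12 hφ hO hV hVdef hz).1
  have k2 : ∀ z ∈ O, pd 1 φ (Mfun V z) * pdt V z = -1 :=
    fun z hz => (key12 hφ hO hV hVdef hz).2
  have h1c : ContDiffAt ℝ 1 (fderiv ℝ V) p := hVc.fderiv_right (m := 1) (by decide)
  have hdpdx : DifferentiableAt ℝ (pdx V) p :=
    ((h1c.clm_apply contDiffAt_const).differentiableAt one_ne_zero :
      DifferentiableAt ℝ (fun z => fderiv ℝ V z (1, 0)) p)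
  have hdpdt : DifferentiableAt ℝ (pdt V) p :=
    ((h1c.clm_apply contDiffAt_const).differentiableAt one_ne_zero :
      DifferentiableAt ℝ (fun z => fderiv ℝ V z (0, 1)) p)
  have hM : HasFDerivAt (Mfun V)
      ((ContinuousLinearMap.fst ℝ ℝ ℝ).smulRight (ee 0)
        + (fderiv ℝ V p).smulRight (ee 1)) p := hasFDerivAt_M hVdp
  have hd0 := (((pd_smooth hφ 0).differentiable (by decide)) (Mfun V p)).hasFDerivAt
  have hd1 := (((pd_smooth hφ 1).differentiable (by decide)) (Mfun V p)).hasFDerivAt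
  have hA1 : HasFDerivAt (fun z => pd 0 φ (Mfun V z))
      ((fderiv ℝ (pd 0 φ) (Mfun V p)).comp
        ((ContinuousLinearMap.fst ℝ ℝ ℝ).smulRight (ee 0)
          + (fderiv ℝ V p).smulRight (ee 1))) p := hd0.comp p hM
  have hA2 : HasFDerivAt (fun z => pd 1 φ (Mfun V z))
      ((fderiv ℝ (pd 1 φ) (Mfun V p)).comp
        ((ContinuousLinearMap.fst ℝ ℝ ℝ).smulRight (ee 0)
          + (fderiv ℝ V p).smulRight (ee 1))) p := hd1.comp p hM
  have hAfd : HasFDerivAt (fun z => pd 0 φ (Mfun V z) + pd 1 φ (Mfun V z) * pdx V z)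
      ((fderiv ℝ (pd 0 φ) (Mfun V p)).comp
        ((ContinuousLinearMap.fst ℝ ℝ ℝ).smulRight (ee 0)
          + (fderiv ℝ V p).smulRight (ee 1))
        + (pd 1 φ (Mfun V p) • fderiv ℝ (pdx V) p
          + pdx V p • (fderiv ℝ (pd 1 φ) (Mfun V p)).comp
              ((ContinuousLinearMap.fst ℝ ℝ ℝ).smulRight (ee 0)
                + (fderiv ℝ V p).smulRight (ee 1)))) p :=
    hA1.add (hA2.mul hdpdx.hasFDerivAt)
  have hBfd : HasFDerivAt (fun z => pd 1 φ (Mfun V z) * pdt V z)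
      (pd 1 φ (Mfun V p) • fderiv ℝ (pdt V) p
        + pdt V p • (fderiv ℝ (pd 1 φ) (Mfun V p)).comp
            ((ContinuousLinearMap.fst ℝ ℝ ℝ).smulRight (ee 0)
              + (fderiv ℝ V p).smulRight (ee 1))) p :=
    hA2.mul hdpdt.hasFDerivAt
  have hAev : (fun z => pd 0 φ (Mfun V z) + pd 1 φ (Mfun V z) * pdx V z)
      =ᶠ[nhds p] (fun _ => (0:ℝ)) := by
    filter_upwards [hO.mem_nhds hp] with w hw
    exact k1 w hw
  have hBev : (fun z => pd 1 φ (Mfun V z) * pdt V z) =ᶠ[nhds p] (fun _ => (-1:ℝ)) := by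
    filter_upwards [hO.mem_nhds hp] with w hw
    exact k2 w hw
  have hDA : ((fderiv ℝ (pd 0 φ) (Mfun V p)).comp
        ((ContinuousLinearMap.fst ℝ ℝ ℝ).smulRight (ee 0)
          + (fderiv ℝ V p).smulRight (ee 1))
        + (pd 1 φ (Mfun V p) • fderiv ℝ (pdx V) p
          + pdx V p • (fderiv ℝ (pd 1 φ) (Mfun V p)).comp
              ((ContinuousLinearMap.fst ℝ ℝ ℝ).smulRight (ee 0)
                + (fderiv ℝ V p).smulRight (ee 1)))) = 0 := by
    rw [← hAfd.fderiv, hAev.fderiv_eq]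
    simp
  have hDB : (pd 1 φ (Mfun V p) • fderiv ℝ (pdt V) p
        + pdt V p • (fderiv ℝ (pd 1 φ) (Mfun V p)).comp
            ((ContinuousLinearMap.fst ℝ ℝ ℝ).smulRight (ee 0)
              + (fderiv ℝ V p).smulRight (ee 1))) = 0 := by
    rw [← hBfd.fderiv, hBev.fderiv_eq]
    simp
  have hx1 : fderiv ℝ V p (1, 0) = pdx V p := rfl
  have hx2 : fderiv ℝ V p (0, 1) = pdt V p := rfl
  have hpx1 : fderiv ℝ (pdx V) p (1, 0) = pdx (pdx V) p := rfl
  have hpx2 : fderiv ℝ (pdx V) p (0, 1) = pdt (pdx V) p := rfl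
  have hpt2 : fderiv ℝ (pdt V) p (0, 1) = pdt (pdt V) p := rfl
  have e3 : pd 0 (pd 0 φ) q + pdx V p * pd 1 (pd 0 φ) q
      + (pd 1 φ q * pdx (pdx V) p
        + pdx V p * (pd 0 (pd 1 φ) q + pdx V p * pd 1 (pd 1 φ) q)) = 0 := by
    have happ := DFunLike.congr_fun hDA (1, 0)
    simp only [ContinuousLinearMap.add_apply, ContinuousLinearMap.comp_apply,
      ContinuousLinearMap.smul_apply, ContinuousLinearMap.smulRight_apply,
      ContinuousLinearMap.coe_fst', ContinuousLinearMap.zero_apply,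
      map_add, map_smul, smul_eq_mul, one_smul] at happ
    simp only [hx1, hx2, hpx1, hpx2, hpt2, pd_ee, hMp] at happ
    linear_combination happ
  have e4 : pdt V p * pd 1 (pd 0 φ) q
      + (pd 1 φ q * pdt (pdx V) p + pdx V p * (pdt V p * pd 1 (pd 1 φ) q)) = 0 := by
    have happ := DFunLike.congr_fun hDA (0, 1)
    simp only [ContinuousLinearMap.add_apply, ContinuousLinearMap.comp_apply,
      ContinuousLinearMap.smul_apply, ContinuousLinearMap.smulRight_apply,
      ContinuousLinearMap.coe_fst', ContinuousLinearMap.zero_apply,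
      map_add, map_smul, smul_eq_mul, zero_smul, zero_mul, map_zero, zero_add] at happ
    simp only [hx1, hx2, hpx1, hpx2, hpt2, pd_ee, hMp] at happ
    linear_combination happ
  have e5 : pd 1 φ q * pdt (pdt V) p + pdt V p * (pdt V p * pd 1 (pd 1 φ) q) = 0 := by
    have happ := DFunLike.congr_fun hDB (0, 1)
    simp only [ContinuousLinearMap.add_apply, ContinuousLinearMap.comp_apply,
      ContinuousLinearMap.smul_apply, ContinuousLinearMap.smulRight_apply,
      ContinuousLinearMap.coe_fst', ContinuousLinearMap.zero_apply,
      map_add, map_smul, smul_eq_mul, zero_smul, zero_mul, map_zero, zero_add] at happ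
    simp only [hx1, hx2, hpx1, hpx2, hpt2, pd_ee, hMp] at happ
    linear_combination happ
  have e1 : pd 0 φ q + pd 1 φ q * pdx V p = 0 := by
    have := k1 p hp; rwa [hMp] at this
  have e2 : pd 1 φ q * pdt V p = -1 := by
    have := k2 p hp; rwa [hMp] at this
  have hc3 : pd 2 φ q = 0 := pd2_zero hφ hsym p.1 (V p) hr
  have e6 : pd 2 (pd 2 φ) q = pd 1 φ q / V p := pd22 hφ hsym p.1 (V p) hr
  have hsymm : pd 1 (pd 0 φ) q = pd 0 (pd 1 φ) q := pd_symm hφ 1 0 q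
  have hgrad : gradSq φ q = pd 0 φ q ^ 2 + pd 1 φ q ^ 2 := by
    simp [gradSq, Fin.sum_univ_three, hc3]
  have hSpos : 0 < sqrt (1 + (pdx V p) ^ 2 + (pdt V p) ^ 2) :=
    Real.sqrt_pos.mpr (by positivity)
  have hS2 : (sqrt (1 + (pdx V p) ^ 2 + (pdt V p) ^ 2)) ^ 2
      = 1 + (pdx V p) ^ 2 + (pdt V p) ^ 2 := Real.sq_sqrt (by positivity)
  have hW : sqrt (1 + gradSq φ q)
      = pd 1 φ q * sqrt (1 + (pdx V p) ^ 2 + (pdt V p) ^ 2) := by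
    have hrad : 1 + gradSq φ q
        = (pd 1 φ q * sqrt (1 + (pdx V p) ^ 2 + (pdt V p) ^ 2)) ^ 2 := by
      rw [hgrad, mul_pow, hS2]
      linear_combination (pd 0 φ q - pd 1 φ q * pdx V p) * e1
        + (1 - pd 1 φ q * pdt V p) * e2
    rw [hrad, Real.sqrt_sq (mul_nonneg hb.le hSpos.le)]
  rw [theta_eq hφ q]
  exact endgame (pd 1 φ q) (V p) (pdx V p) (pdt V p) (pdx (pdx V) p) (pdt (pdx V) p)
    (pdt (pdt V) p) (pd 0 φ q) (pd 0 (pd 0 φ) q) (pd 0 (pd 1 φ) q) (pd 1 (pd 0 φ) q)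
    (pd 1 (pd 1 φ) q) (pd 2 (pd 2 φ) q) (pd 2 φ q) (pd 0 (pd 2 φ) q) (pd 1 (pd 2 φ) q)
    (pd 2 (pd 0 φ) q) (pd 2 (pd 1 φ) q) (pd 2 (pd 2 φ) q)
    (sqrt (1 + (pdx V p) ^ 2 + (pdt V p) ^ 2)) (sqrt (1 + gradSq φ q))
    hb hr hSpos hW hS2 hsymm hc3 e1 e2 e3 e4 e5 e6
end
end

section
/- Let V, V^u, 𝐰 be smooth real-valued functions on an open set O ⊂ ℝ² (with variables (x,t)), with V_t(x,t) ≠ 0 on O. Define 𝐰_{;t} := 𝐰_t − (V_{tt}/V_t)𝐰, 𝐰_{;x} := 𝐰_x − (V_{xt}/V_t)𝐰 and I := 1 − 𝐰_{;t}/V_t, and suppose I(x,t) ≠ 0 on O. If V(x,t) = V^u(x, t − 𝐰(x,t)/V_t(x,t)) for all (x,t) ∈ O (with (x, t − 𝐰/V_t) staying in the domain of V^u), then for all (x,t) ∈ O: V^u_t(x, t − 𝐰/V_t(x,t)) = V_t(x,t)/I(x,t) and V^u_x(x, t − 𝐰/V_t(x,t)) = V_x(x,t) + 𝐰_{;x}(x,t)/I(x,t).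 -/
open Real

noncomputable section

/-- 𝐰_{;t} := 𝐰_t − (V_{tt}/V_t)𝐰. -/
def wSemiT (V w : ℝ × ℝ → ℝ) (p : ℝ × ℝ) : ℝ :=
  pdt w p - pdt (pdt V) p / pdt V p * w p

/-- 𝐰_{;x} := 𝐰_x − (V_{xt}/V_t)𝐰. -/
def wSemiX (V w : ℝ × ℝ → ℝ) (p : ℝ × ℝ) : ℝ :=
  pdx w p - pdx (pdt V) p / pdt V p * w p

/-- I := 1 − 𝐰_{;t}/V_t. -/
def Ifun (V w : ℝ × ℝ → ℝ) (p : ℝ × ℝ) : ℝ := 1 - wSemiT V w p / pdt V p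

/-!
Differentiate `V = V^u ∘ (x, t - g)` with `g = 𝐰 / V_t` by the chain rule. The quotient rule gives
`g_t = 𝐰_{;t} / V_t` and `g_x = 𝐰_{;x} / V_t`, so `V_t = I · V^u_t` and `V_x = V^u_x - g_x · V^u_t`;
solving this triangular system yields both identities.
-/

open Filter Topology

theorem fderiv_div_apply {E : Type*} [NormedAddCommGroup E] [NormedSpace ℝ E]
    {f g : E → ℝ} {x : E} (hf : DifferentiableAt ℝ f x) (hg : DifferentiableAt ℝ g x)
    (hx : g x ≠ 0) (v : E) :
    fderiv ℝ (fun y => f y / g y) x v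
      = (fderiv ℝ f x v - fderiv ℝ g x v / g x * f x) / g x := by
  have hinv : HasFDerivAt (fun y => (g y)⁻¹) (-(g x ^ 2)⁻¹ • fderiv ℝ g x) x :=
    (hasDerivAt_inv hx).comp_hasFDerivAt x hg.hasFDerivAt
  simp only [div_eq_mul_inv]
  rw [(hf.hasFDerivAt.fun_mul hinv).fderiv]
  simp only [add_apply, smul_apply, smul_eq_mul]
  field_simp
  ring

theorem fderiv_apply_eq_pdx_add_pdt (f : ℝ × ℝ → ℝ) (p : ℝ × ℝ) (a b : ℝ) :
    fderiv ℝ f p (a, b) = a * pdx f p + b * pdt f p := by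
  have hab : (a, b) = a • ((1 : ℝ), (0 : ℝ)) + b • ((0 : ℝ), (1 : ℝ)) := by
    ext <;> simp
  rw [hab, map_add, map_smul, map_smul, smul_eq_mul, smul_eq_mul, pdx, pdt]

theorem ContDiffAt.differentiableAt_pdt {f : ℝ × ℝ → ℝ} {p : ℝ × ℝ}
    (hf : ContDiffAt ℝ 2 f p) : DifferentiableAt ℝ (pdt f) p :=
  ((hf.fderiv_right (m := 1) (by norm_num)).clm_apply contDiffAt_const).differentiableAt one_ne_zero

theorem Filter.EventuallyEq.pdt_eq {f g : ℝ × ℝ → ℝ} {p : ℝ × ℝ} (h : f =ᶠ[𝓝 p] g) :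
    pdt f p = pdt g p := by
  rw [pdt, pdt, h.fderiv_eq]

theorem Filter.EventuallyEq.pdx_eq {f g : ℝ × ℝ → ℝ} {p : ℝ × ℝ} (h : f =ᶠ[𝓝 p] g) :
    pdx f p = pdx g p := by
  rw [pdx, pdx, h.fderiv_eq]

section ShiftInTime

variable {F g : ℝ × ℝ → ℝ} {p : ℝ × ℝ}

theorem fderiv_comp_sub_snd_apply (hF : DifferentiableAt ℝ F (p.1, p.2 - g p))
    (hg : DifferentiableAt ℝ g p) (v : ℝ × ℝ) :
    fderiv ℝ (fun q => F (q.1, q.2 - g q)) p v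
      = fderiv ℝ F (p.1, p.2 - g p) (v.1, v.2 - fderiv ℝ g p v) := by
  have hshift := hasFDerivAt_fst.prodMk (hasFDerivAt_snd.fun_sub hg.hasFDerivAt)
  have hcomp : HasFDerivAt (fun q => F (q.1, q.2 - g q)) _ p := hF.hasFDerivAt.comp p hshift
  rw [hcomp.fderiv]
  rfl

theorem pdt_comp_sub_snd (hF : DifferentiableAt ℝ F (p.1, p.2 - g p))
    (hg : DifferentiableAt ℝ g p) :
    pdt (fun q => F (q.1, q.2 - g q)) p = (1 - pdt g p) * pdt F (p.1, p.2 - g p) := by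
  rw [pdt, fderiv_comp_sub_snd_apply hF hg, fderiv_apply_eq_pdx_add_pdt]
  simp only [pdt]
  ring

theorem pdx_comp_sub_snd (hF : DifferentiableAt ℝ F (p.1, p.2 - g p))
    (hg : DifferentiableAt ℝ g p) :
    pdx (fun q => F (q.1, q.2 - g q)) p
      = pdx F (p.1, p.2 - g p) - pdx g p * pdt F (p.1, p.2 - g p) := by
  rw [pdx, fderiv_comp_sub_snd_apply hF hg, fderiv_apply_eq_pdx_add_pdt]
  simp only [pdx]
  ring

end ShiftInTime

section Quotient

variable {V w : ℝ × ℝ → ℝ} {p : ℝ × ℝ}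

theorem pdt_div_pdt (hw : DifferentiableAt ℝ w p) (hV : DifferentiableAt ℝ (pdt V) p)
    (hVt : pdt V p ≠ 0) :
    pdt (fun q => w q / pdt V q) p = wSemiT V w p / pdt V p :=
  fderiv_div_apply hw hV hVt _

theorem pdx_div_pdt (hw : DifferentiableAt ℝ w p) (hV : DifferentiableAt ℝ (pdt V) p)
    (hVt : pdt V p ≠ 0) :
    pdx (fun q => w q / pdt V q) p = wSemiX V w p / pdt V p :=
  fderiv_div_apply hw hV hVt _

end Quotient

theorem statement12_general (O O' : Set (ℝ × ℝ)) (hO : IsOpen O) (hO' : IsOpen O')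
    (V Vu w : ℝ × ℝ → ℝ)
    (hV : ContDiffOn ℝ (⊤ : ℕ∞) V O) (hw : ContDiffOn ℝ (⊤ : ℕ∞) w O)
    (hVu : ContDiffOn ℝ (⊤ : ℕ∞) Vu O')
    (hVt : ∀ p ∈ O, pdt V p ≠ 0)
    (hmem : ∀ p ∈ O, (p.1, p.2 - w p / pdt V p) ∈ O')
    (hrel : ∀ p ∈ O, V p = Vu (p.1, p.2 - w p / pdt V p)) :
    ∀ p ∈ O,
      pdt Vu (p.1, p.2 - w p / pdt V p) = pdt V p / Ifun V w p ∧
      pdx Vu (p.1, p.2 - w p / pdt V p) = pdx V p + wSemiX V w p / Ifun V w p := by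
  intro p hp
  have hVtp := hVt p hp
  have hVtd : DifferentiableAt ℝ (pdt V) p :=
    ((hV.contDiffAt (hO.mem_nhds hp)).of_le (by norm_cast)).differentiableAt_pdt
  have hwd : DifferentiableAt ℝ w p :=
    (hw.contDiffAt (hO.mem_nhds hp)).differentiableAt (by simp)
  have hVud : DifferentiableAt ℝ Vu (p.1, p.2 - w p / pdt V p) :=
    (hVu.contDiffAt (hO'.mem_nhds (hmem p hp))).differentiableAt (by simp)
  have hgd : DifferentiableAt ℝ (fun q => w q / pdt V q) p := by
    simpa only [div_eq_mul_inv] using hwd.fun_mul (hVtd.fun_inv hVtp)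
  have hVeq : V =ᶠ[𝓝 p] fun q => Vu (q.1, q.2 - w q / pdt V q) :=
    eventually_of_mem (hO.mem_nhds hp) hrel
  have hchain_t : pdt V p = Ifun V w p * pdt Vu (p.1, p.2 - w p / pdt V p) := by
    refine hVeq.pdt_eq.trans ?_
    rw [pdt_comp_sub_snd hVud hgd, pdt_div_pdt hwd hVtd hVtp, Ifun]
  have hchain_x : pdx V p = pdx Vu (p.1, p.2 - w p / pdt V p)
      - wSemiX V w p / pdt V p * pdt Vu (p.1, p.2 - w p / pdt V p) := by
    refine hVeq.pdx_eq.trans ?_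
    rw [pdx_comp_sub_snd hVud hgd, pdx_div_pdt hwd hVtd hVtp]
  set Vut := pdt Vu (p.1, p.2 - w p / pdt V p)
  have hIp : Ifun V w p ≠ 0 := left_ne_zero_of_mul (hchain_t ▸ hVtp)
  have ht : Vut = pdt V p / Ifun V w p := by
    rw [eq_div_iff hIp, hchain_t, mul_comm]
  refine ⟨ht, ?_⟩
  rw [hchain_x, ht]
  field_simp
  ring

/-- if V(x,t) = V^u(x, t − 𝐰/V_t) then
V^u_t(x, t − 𝐰/V_t) = V_t/I and V^u_x(x, t − 𝐰/V_t) = V_x + 𝐰_{;x}/I. -/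
theorem statement12 (O O' : Set (ℝ × ℝ)) (hO : IsOpen O) (hO' : IsOpen O')
    (V Vu w : ℝ × ℝ → ℝ)
    (hV : ContDiffOn ℝ (⊤ : ℕ∞) V O) (hw : ContDiffOn ℝ (⊤ : ℕ∞) w O)
    (hVu : ContDiffOn ℝ (⊤ : ℕ∞) Vu O')
    (hVt : ∀ p ∈ O, pdt V p ≠ 0)
    (hI : ∀ p ∈ O, Ifun V w p ≠ 0)
    (hmem : ∀ p ∈ O, (p.1, p.2 - w p / pdt V p) ∈ O')
    (hrel : ∀ p ∈ O, V p = Vu (p.1, p.2 - w p / pdt V p)) :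
    ∀ p ∈ O,
      pdt Vu (p.1, p.2 - w p / pdt V p) = pdt V p / Ifun V w p ∧
      pdx Vu (p.1, p.2 - w p / pdt V p) = pdx V p + wSemiX V w p / Ifun V w p :=
  statement12_general O O' hO hO' V Vu w hV hw hVu hVt hmem hrel
end
end
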